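/- arXiv:1211.2625 — 2 statements merged into one kernel-verified Lean document; each statement's English description precedes it below -/
import Mathlib

section
/- Let R be a noetherian integral domain with quotient field Q(R), let f_1,…,f_n, f ∈ R with (f_1,…,f_n) ≠ 0, set B = R[T_1,…,T_n] and h = f_1T_1+⋯+f_nT_n+f. Then 𝔭 = B ∩ (h)Q(R)[T_1,…,T_n] (the contraction to B of the principal ideal generated by h in Q(R)[T_1,…,T_n]) is a prime ideal of B which is a minimal prime over (h), satisfies 𝔭 ∩ R = 0, and is the unique minimal prime ideal over (h) whose contraction to R is the zero ideal. -/
open MvPolynomial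


/-- A polynomial of total degree one over a field generates a prime ideal. -/
theorem span_linear_isPrime {K : Type*} [Field K] {n : ℕ} (a : Fin n → K) (a₀ : K)
    (i : Fin n) (hi : a i ≠ 0) :
    (Ideal.span {((∑ j : Fin n, C (a j) * X j) + C a₀ : MvPolynomial (Fin n) K)}).IsPrime := by
  classical
  set H : MvPolynomial (Fin n) K := (∑ j : Fin n, C (a j) * X j) + C a₀ with hH
  set s : MvPolynomial (Fin n) K := ∑ j ∈ Finset.univ.erase i, C (a j) * X j with hs
  have hsplit : H = C (a i) * X i + s + C a₀ := by
    rw [hH, hs, ← Finset.add_sum_erase _ _ (Finset.mem_univ i)]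
  set e : MvPolynomial (Fin n) K := - C (a i)⁻¹ * (C a₀ + s) with he
  set v : Fin n → MvPolynomial (Fin n) K := fun j => if j = i then e else X j with hv
  set ψ : MvPolynomial (Fin n) K →ₐ[K] MvPolynomial (Fin n) K := aeval v with hψ
  have hinv : (C (a i) : MvPolynomial (Fin n) K) * C (a i)⁻¹ = 1 := by
    rw [← C_mul, mul_inv_cancel₀ hi, C_1]
  have hψs : ψ s = s := by
    rw [hs, map_sum]
    refine Finset.sum_congr rfl fun j hj => ?_
    have hji : j ≠ i := (Finset.mem_erase.mp hj).1
    simp [hψ, hv, if_neg hji]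
  have hψH : ψ H = 0 := by
    have : ψ H = C (a i) * e + s + C a₀ := by
      rw [hsplit]
      simp only [map_add, map_mul, hψs]
      simp [hψ, hv, algebraMap_eq]
    rw [this, he]
    have : C (a i) * (-C (a i)⁻¹ * (C a₀ + s)) = -(C (a i) * C (a i)⁻¹) * (C a₀ + s) := by ring
    rw [this, hinv]; ring
  have hEX : e - X i = - C (a i)⁻¹ * H := by
    rw [hsplit, he]
    have : -C (a i)⁻¹ * (C (a i) * X i + s + C a₀)
        = -((C (a i) * C (a i)⁻¹) * X i) + -C (a i)⁻¹ * (s + C a₀) := by ring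
    rw [this, hinv]; ring
  have hcomp : (Ideal.Quotient.mkₐ K (Ideal.span {H})).comp ψ = Ideal.Quotient.mkₐ K _ := by
    apply MvPolynomial.algHom_ext
    intro j
    by_cases hj : j = i
    · subst hj
      have : ψ (X j) = e := by simp [hψ, hv]
      simp only [AlgHom.comp_apply, this, Ideal.Quotient.mkₐ_eq_mk]
      rw [Ideal.Quotient.eq]
      rw [hEX]
      exact Ideal.mul_mem_left _ _ (Ideal.subset_span rfl)
    · simp [hψ, hv, if_neg hj]
  have hker : Ideal.span {H} = RingHom.ker (ψ : MvPolynomial (Fin n) K →+* MvPolynomial (Fin n) K) := by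
    apply le_antisymm
    · rw [Ideal.span_le, Set.singleton_subset_iff]
      simpa [RingHom.mem_ker] using hψH
    · intro p hp
      have hpq : Ideal.Quotient.mk (Ideal.span {H}) (ψ p) = Ideal.Quotient.mk _ p := by
        have := congrArg (fun g => g p) hcomp
        simpa using this
      have : ψ p = 0 := hp
      rw [this, map_zero] at hpq
      exact (Ideal.Quotient.eq_zero_iff_mem).mp hpq.symm
  rw [hker]
  exact RingHom.ker_isPrime _

open MvPolynomial

attribute [local instance] MvPolynomial.algebraMvPolynomial

section Main

variable {R : Type*} [CommRing R] [IsDomain R] {n : ℕ} (f : Fin n → R) (f₀ : R)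

/-- Image of forcing poly in fraction field. -/
theorem forcing_map_eq :
    MvPolynomial.map (algebraMap R (FractionRing R)) ((∑ i : Fin n, C (f i) * X i) + C f₀)
      = (∑ i : Fin n, C (algebraMap R (FractionRing R) (f i)) * X i)
        + C (algebraMap R (FractionRing R) f₀) := by
  simp [map_sum]

theorem span_image_isPrime (hf : ∃ i, f i ≠ 0) :
    (Ideal.span {MvPolynomial.map (algebraMap R (FractionRing R))
      ((∑ i : Fin n, C (f i) * X i) + C f₀)}).IsPrime := by
  obtain ⟨i, hi⟩ := hf
  rw [forcing_map_eq]
  refine span_linear_isPrime _ _ i ?_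
  simpa using (map_ne_zero_iff _ (IsFractionRing.injective R (FractionRing R))).mpr hi

theorem key_le (hf : ∃ i, f i ≠ 0)
    (q : Ideal (MvPolynomial (Fin n) R)) (hq : q.IsPrime)
    (hle : Ideal.span {((∑ i : Fin n, C (f i) * X i) + C f₀ : MvPolynomial (Fin n) R)} ≤ q)
    (hq0 : Ideal.comap (C : R →+* MvPolynomial (Fin n) R) q = ⊥) :
    Ideal.comap (MvPolynomial.map (algebraMap R (FractionRing R)))
      (Ideal.span {MvPolynomial.map (algebraMap R (FractionRing R))
        ((∑ i : Fin n, C (f i) * X i) + C f₀)}) ≤ q := by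
  classical
  set K := FractionRing R
  set M : Submonoid (MvPolynomial (Fin n) R) :=
    (nonZeroDivisors R).map (C : R →+* MvPolynomial (Fin n) R) with hM
  have hdisj : Disjoint (M : Set (MvPolynomial (Fin n) R)) (q : Set (MvPolynomial (Fin n) R)) := by
    rw [Set.disjoint_left]
    rintro x ⟨r, hr, rfl⟩ hx
    have : r ∈ Ideal.comap (C : R →+* MvPolynomial (Fin n) R) q := hx
    rw [hq0] at this
    exact nonZeroDivisors.ne_zero hr this
  have hmap : q = Ideal.comap (algebraMap (MvPolynomial (Fin n) R) (MvPolynomial (Fin n) K))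
      (Ideal.map (algebraMap (MvPolynomial (Fin n) R) (MvPolynomial (Fin n) K)) q) :=
    (IsLocalization.comap_map_of_isPrime_disjoint M (MvPolynomial (Fin n) K) hq hdisj).symm
  rw [show (MvPolynomial.map (algebraMap R K)) =
    algebraMap (MvPolynomial (Fin n) R) (MvPolynomial (Fin n) K) from rfl]
  rw [hmap]
  apply Ideal.comap_mono
  rw [Ideal.span_le, Set.singleton_subset_iff]
  exact Ideal.mem_map_of_mem _ (hle (Ideal.subset_span rfl))

end Main


/-- The forcing equation `h = f_1T_1+⋯+f_nT_n+f₀` in `B = R[T_1,…,T_n]`. -/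
noncomputable abbrev forcingPoly (R : Type*) [CommRing R] (n : ℕ) (f : Fin n → R) (f₀ : R) :
    MvPolynomial (Fin n) R :=
  (∑ i : Fin n, C (f i) * X i) + C f₀

/-- The horizontal prime `𝔭 = B ∩ (h)·Q(R)[T_1,…,T_n]`, i.e. the contraction to
`B = R[T_1,…,T_n]` of the ideal generated by `h` in `Q(R)[T_1,…,T_n]`. -/
noncomputable abbrev horizontalPrime (R : Type*) [CommRing R] [IsDomain R]
    (n : ℕ) (f : Fin n → R) (f₀ : R) : Ideal (MvPolynomial (Fin n) R) :=
  Ideal.comap (MvPolynomial.map (algebraMap R (FractionRing R)))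
    (Ideal.span {MvPolynomial.map (algebraMap R (FractionRing R)) (forcingPoly R n f f₀)})

/-- For a noetherian domain `R` and a forcing equation
`h = f_1T_1+⋯+f_nT_n+f₀` with `(f_1,…,f_n) ≠ 0`, the contraction
`𝔭 = B ∩ (h)·Q(R)[T_1,…,T_n]` is a prime ideal of `B = R[T_1,…,T_n]`, a minimal prime
over `(h)`, contracts to `0` in `R`, and is the unique minimal prime over `(h)` whose
contraction to `R` is zero. -/
theorem horizontal_prime_exists_unique
    (R : Type*) [CommRing R] [IsDomain R] [IsNoetherianRing R]
    (n : ℕ) (f : Fin n → R) (f₀ : R) (hf : ∃ i, f i ≠ 0) :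
    (horizontalPrime R n f f₀).IsPrime ∧
    horizontalPrime R n f f₀ ∈ (Ideal.span {forcingPoly R n f f₀}).minimalPrimes ∧
    Ideal.comap (C : R →+* MvPolynomial (Fin n) R) (horizontalPrime R n f f₀) = ⊥ ∧
    ∀ q ∈ (Ideal.span {forcingPoly R n f f₀}).minimalPrimes,
      Ideal.comap (C : R →+* MvPolynomial (Fin n) R) q = ⊥ →
        q = horizontalPrime R n f f₀ := by
  classical
  set K := FractionRing R
  have hSP : (Ideal.span {MvPolynomial.map (algebraMap R K) (forcingPoly R n f f₀)}).IsPrime :=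
    span_image_isPrime f f₀ hf
  have hP : (horizontalPrime R n f f₀).IsPrime := hSP.comap _
  -- contraction to R is zero
  have hC0 : Ideal.comap (C : R →+* MvPolynomial (Fin n) R) (horizontalPrime R n f f₀) = ⊥ := by
    apply le_antisymm _ bot_le
    intro r hr
    simp only [Ideal.mem_comap] at hr
    rw [map_C] at hr
    by_contra hr0
    have hr0' : algebraMap R K r ≠ 0 := by
      simpa using (map_ne_zero_iff _ (IsFractionRing.injective R K)).mpr
        (by simpa using hr0)
    have hu : IsUnit ((C (algebraMap R K r)) : MvPolynomial (Fin n) K) :=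
      (isUnit_iff_ne_zero.mpr hr0').map C
    exact hSP.ne_top (Ideal.eq_top_of_isUnit_mem _ hr hu)
  -- span {h} ≤ 𝔭
  have hle : Ideal.span {forcingPoly R n f f₀} ≤ horizontalPrime R n f f₀ := by
    rw [Ideal.span_le, Set.singleton_subset_iff]
    exact Ideal.subset_span rfl
  refine ⟨hP, ⟨⟨hP, hle⟩, ?_⟩, hC0, ?_⟩
  · -- minimality
    rintro J ⟨hJp, hJle⟩ hJ𝔭
    have hJ0 : Ideal.comap (C : R →+* MvPolynomial (Fin n) R) J = ⊥ :=
      le_antisymm (hC0 ▸ Ideal.comap_mono hJ𝔭) bot_le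
    exact key_le f f₀ hf J hJp hJle hJ0
  · rintro q ⟨⟨hqp, hqle⟩, hqmin⟩ hq0
    have h1 : horizontalPrime R n f f₀ ≤ q := key_le f f₀ hf q hqp hqle hq0
    exact le_antisymm (hqmin ⟨hP, hle⟩ h1) h1
end

section
/- Let R be a noetherian integral domain, B = R[T_1,…,T_n], and let h = f_1T_1+⋯+f_nT_n+f be a forcing equation with (f_1,…,f_n) ≠ 0. Suppose h = d·h' where d ∈ R and h' = f_1'T_1+⋯+f_n'T_n+f' is a prime element of B. Then the minimal prime ideals over (h) in B are exactly the principal prime (h') together with the extended ideals 𝔮B, where 𝔮 ranges over the minimal primes over (d) in R; moreover (h') equals the horizontal prime B ∩ (h)Q(R)[T_1,…,T_n]. -/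
open MvPolynomial

/-! ### Auxiliary lemmas -/

/-- Coefficient of `X i` in the forcing polynomial. -/
lemma forcingPoly_coeff_single (R : Type*) [CommRing R] (n : ℕ) (f : Fin n → R) (f₀ : R)
    (i : Fin n) : MvPolynomial.coeff (Finsupp.single i 1) (forcingPoly R n f f₀) = f i := by
  classical
  rw [forcingPoly, coeff_add, coeff_C, if_neg, add_zero, coeff_sum]
  · rw [Finset.sum_eq_single i]
    · simp [coeff_C_mul, coeff_X]
    · intro j _ hj
      rw [coeff_C_mul, coeff_X', if_neg, mul_zero]
      rw [Finsupp.single_left_inj (one_ne_zero' ℕ)]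
      exact hj
    · simp
  · intro h
    exact one_ne_zero' ℕ (Finsupp.single_eq_zero.mp h.symm)

/-- Constant coefficient of the forcing polynomial. -/
lemma forcingPoly_coeff_zero (R : Type*) [CommRing R] (n : ℕ) (f : Fin n → R) (f₀ : R) :
    MvPolynomial.coeff 0 (forcingPoly R n f f₀) = f₀ := by
  classical
  rw [forcingPoly, coeff_add, coeff_C, if_pos rfl, coeff_sum]
  rw [Finset.sum_eq_zero, zero_add]
  intro j _
  rw [coeff_C_mul, coeff_X', if_neg, mul_zero]
  intro h
  exact one_ne_zero' ℕ (Finsupp.single_eq_zero.mp h)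

/-- If some linear coefficient of the forcing polynomial is nonzero, it divides no nonzero
constant. -/
lemma forcingPoly_dvd_C (R : Type*) [CommRing R] [IsDomain R] (n : ℕ) (f' : Fin n → R)
    (f₀' : R) (i : Fin n) (hi : f' i ≠ 0) (r : R)
    (hdvd : forcingPoly R n f' f₀' ∣ C r) : r = 0 := by
  classical
  obtain ⟨t, ht⟩ := hdvd
  set K := FractionRing R
  set φ := algebraMap R K with hφ
  have hφinj : Function.Injective φ := IsFractionRing.injective R K
  set v : Fin n → K := fun j => if j = i then -(φ f₀') / (φ (f' i)) else 0 with hv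
  have := congrArg (eval₂ φ v) ht
  rw [eval₂_C, forcingPoly, eval₂_mul, eval₂_add, eval₂_C] at this
  rw [eval₂_sum] at this
  have hsum : (∑ j : Fin n, eval₂ φ v (C (f' j) * X j)) = φ (f' i) * v i := by
    rw [Finset.sum_eq_single i]
    · rw [eval₂_mul, eval₂_C, eval₂_X]
    · intro j _ hj
      rw [eval₂_mul, eval₂_C, eval₂_X, hv]
      simp [hj]
    · simp
  rw [hsum] at this
  have hfi : φ (f' i) ≠ 0 := fun h => hi (hφinj (by simpa using h))
  have hvi : φ (f' i) * v i = -(φ f₀') := by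
    have hv2 : v i = -(φ f₀') / φ (f' i) := by simp [hv]
    rw [hv2]
    rw [mul_div_assoc', mul_comm, mul_div_assoc, div_self hfi, mul_one]
  rw [hvi, neg_add_cancel, zero_mul] at this
  exact hφinj (by simpa using this)

/-- For a minimal prime `q` over `(d)` in a noetherian domain, some `s ∉ q` multiplies a power
of `q` into `(d)`. -/
lemma exists_mul_pow_mem_span (R : Type*) [CommRing R] [IsDomain R] [IsNoetherianRing R]
    (d : R) (q : Ideal R) (hq : q ∈ (Ideal.span {d}).minimalPrimes) :
    ∃ s : R, s ∉ q ∧ ∃ k : ℕ, ∀ c ∈ q ^ k, s * c ∈ Ideal.span {d} := by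
  classical
  haveI hqP : q.IsPrime := hq.1.1
  set Rq := Localization.AtPrime q
  set φ := algebraMap R Rq with hφ
  have hφinj : Function.Injective φ :=
    IsLocalization.injective Rq q.primeCompl_le_nonZeroDivisors
  have hrad : Ideal.map φ q ≤ (Ideal.span {φ d}).radical := by
    rw [Ideal.radical_eq_sInf]
    refine le_sInf ?_
    rintro P ⟨hdP, hPprime⟩
    have hp : Ideal.comap φ P ≤ q := by
      intro x hx
      by_contra hxq
      have hu : IsUnit (φ x) := IsLocalization.map_units Rq (⟨x, hxq⟩ : q.primeCompl)
      exact hPprime.ne_top (Ideal.eq_top_of_isUnit_mem P hx hu)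
    have hd : Ideal.span {d} ≤ Ideal.comap φ P := by
      rw [Ideal.span_le]
      simpa using hdP (Ideal.subset_span rfl)
    have := hq.2 ⟨hPprime.comap φ, hd⟩ hp
    calc Ideal.map φ q ≤ Ideal.map φ (Ideal.comap φ P) := Ideal.map_mono this
      _ ≤ P := Ideal.map_comap_le
  haveI : IsNoetherianRing Rq := IsLocalization.isNoetherianRing q.primeCompl Rq inferInstance
  obtain ⟨k, hk⟩ := Ideal.exists_pow_le_of_le_radical_of_fg hrad (IsNoetherian.noetherian _)
  obtain ⟨T, hT⟩ := IsNoetherian.noetherian (q ^ k)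
  have hstep : ∀ t : R, t ∈ (T : Set R) → ∃ s : R, s ∉ q ∧ s * t ∈ Ideal.span {d} := by
    intro t ht
    have h1 : φ t ∈ Ideal.span {φ d} := by
      apply hk
      rw [← Ideal.map_pow]
      exact Ideal.mem_map_of_mem φ (hT ▸ Submodule.subset_span ht)
    rw [Ideal.mem_span_singleton] at h1
    obtain ⟨u, hu⟩ := h1
    obtain ⟨⟨a, s⟩, hs⟩ := IsLocalization.surj q.primeCompl u
    refine ⟨s, s.2, ?_⟩
    rw [Ideal.mem_span_singleton]
    refine ⟨a, hφinj ?_⟩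
    rw [hφ] at hu ⊢
    rw [map_mul, map_mul, hu, mul_comm ((algebraMap R Rq) ↑s), mul_assoc, hs]
  choose! sf hsf1 hsf2 using hstep
  refine ⟨∏ t ∈ T, sf t, ?_, k, ?_⟩
  · intro hmem
    rw [Ideal.IsPrime.prod_mem_iff] at hmem
    obtain ⟨t, ht, htq⟩ := hmem
    exact hsf1 t ht htq
  · intro c hc
    rw [← hT] at hc
    refine Submodule.span_induction ?_ ?_ ?_ ?_ hc
    · intro t ht
      obtain ⟨u, hu⟩ := Finset.dvd_prod_of_mem sf ht
      rw [hu, mul_comm (sf t), mul_assoc]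
      exact Ideal.mul_mem_left _ _ (hsf2 t ht)
    · simp
    · intro x y _ _ hx hy
      rw [mul_add]; exact Ideal.add_mem _ hx hy
    · intro r x _ hx
      rw [smul_eq_mul, mul_comm r x, ← mul_assoc]
      exact Ideal.mul_mem_right _ _ hx

/-- A prime polynomial dividing no nonzero constant does not lie in the extension of a minimal
prime over `(d)` with `d ≠ 0`. -/
lemma prime_not_mem_map_C (R : Type*) [CommRing R] [IsDomain R] [IsNoetherianRing R] (n : ℕ)
    {d : R} (hd : d ≠ 0) {q : Ideal R} (hq : q ∈ (Ideal.span {d}).minimalPrimes)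
    {p : MvPolynomial (Fin n) R} (hp : Prime p) (hnc : ∀ r : R, p ∣ C r → r = 0) :
    p ∉ Ideal.map (C : R →+* MvPolynomial (Fin n) R) q := by
  intro hmem
  obtain ⟨s, hs, k, hk⟩ := exists_mul_pow_mem_span R d q hq
  have hpow : p ^ k ∈ Ideal.map (C : R →+* MvPolynomial (Fin n) R) (q ^ k) := by
    rw [Ideal.map_pow]
    exact Ideal.pow_mem_pow hmem k
  have hcoeff : ∀ m, coeff m (C s * p ^ k) ∈ Ideal.span {d} := by
    intro m
    rw [coeff_C_mul]
    exact hk _ (MvPolynomial.mem_map_C_iff.mp hpow m)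
  have hmem2 : C s * p ^ k ∈ Ideal.map (C : R →+* MvPolynomial (Fin n) R) (Ideal.span {d}) :=
    MvPolynomial.mem_map_C_iff.mpr hcoeff
  rw [Ideal.map_span, Set.image_singleton, Ideal.mem_span_singleton] at hmem2
  obtain ⟨g, hg⟩ := hmem2
  have hnd : ¬ p ∣ C d := fun h => hd (hnc d h)
  have hdvd : p ^ k ∣ C d * g := ⟨C s, by rw [← hg]; ring⟩
  obtain ⟨g', hg'⟩ := hp.pow_dvd_of_dvd_mul_left k hnd hdvd
  have hcancel : C s = C d * g' := by
    have hpk : p ^ k ≠ 0 := pow_ne_zero k hp.ne_zero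
    apply mul_right_cancel₀ hpk
    rw [hg, hg']; ring
  have : d ∣ s := by
    refine ⟨coeff 0 g', ?_⟩
    have := congrArg (coeff 0) hcancel
    rwa [coeff_C_mul, coeff_zero_C] at this
  exact hs (hq.1.2 (Ideal.mem_span_singleton.mpr this))

/-- The extension `qB` of a prime ideal is prime. -/
lemma map_C_isPrime (R : Type*) [CommRing R] (n : ℕ) (q : Ideal R) (hq : q.IsPrime) :
    (Ideal.map (C : R →+* MvPolynomial (Fin n) R) q).IsPrime := by
  have : Ideal.map (C : R →+* MvPolynomial (Fin n) R) q
      = RingHom.ker (MvPolynomial.map (Ideal.Quotient.mk q)) := by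
    rw [MvPolynomial.ker_map, Ideal.mk_ker]
  rw [this]
  exact RingHom.ker_isPrime _

/-- `qB ∩ R = q`. -/
lemma comap_C_map_C (R : Type*) [CommRing R] (n : ℕ) (q : Ideal R) :
    Ideal.comap (C : R →+* MvPolynomial (Fin n) R) (Ideal.map C q) = q := by
  ext x
  rw [Ideal.mem_comap, MvPolynomial.mem_map_C_iff]
  constructor
  · intro h
    simpa [MvPolynomial.coeff_C] using h 0
  · intro h m
    rw [MvPolynomial.coeff_C]
    split <;> simp [h, Ideal.zero_mem]

/-- Clearing denominators for multivariate polynomials over a fraction field. -/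
lemma clearDenoms (R : Type*) [CommRing R] [IsDomain R] (n : ℕ)
    (u : MvPolynomial (Fin n) (FractionRing R)) :
    ∃ (s : R) (u₀ : MvPolynomial (Fin n) R), s ≠ 0 ∧
      MvPolynomial.map (algebraMap R (FractionRing R)) u₀
        = C (algebraMap R (FractionRing R) s) * u := by
  set K := FractionRing R
  set φ := algebraMap R K with hφ
  induction u using MvPolynomial.induction_on with
  | C a =>
    obtain ⟨⟨x, s⟩, hs⟩ := IsLocalization.surj (nonZeroDivisors R) a
    refine ⟨s, C x, nonZeroDivisors.ne_zero s.2, ?_⟩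
    rw [map_C, ← hs, mul_comm]
    rw [map_mul]
  | add p q hp hq =>
    obtain ⟨sp, p₀, hsp, hp₀⟩ := hp
    obtain ⟨sq, q₀, hsq, hq₀⟩ := hq
    refine ⟨sp * sq, C sq * p₀ + C sp * q₀, mul_ne_zero hsp hsq, ?_⟩
    rw [map_add, map_mul, map_mul, map_C, map_C, hp₀, hq₀, map_mul, C_mul]
    ring
  | mul_X p i hp =>
    obtain ⟨sp, p₀, hsp, hp₀⟩ := hp
    exact ⟨sp, p₀ * X i, hsp, by rw [map_mul, map_X, hp₀]; ring⟩

/-- Lemma `forcingprimedecomposition`: If the forcing equation factors as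
`h = d·h'` with `d ∈ R` and `h'` a prime element of `B = R[T_1,…,T_n]`, then the minimal
primes over `(h)` are exactly `(h')` together with the extensions `𝔮B` of the minimal
primes `𝔮` over `(d)` in `R`; moreover `(h')` is the horizontal prime. -/
theorem minimal_primes_of_forcing_equation_with_prime_factorization
    (R : Type*) [CommRing R] [IsDomain R] [IsNoetherianRing R]
    (n : ℕ) (f f' : Fin n → R) (f₀ f₀' d : R) (hf : ∃ i, f i ≠ 0)
    (hfact : forcingPoly R n f f₀ = C d * forcingPoly R n f' f₀')
    (hprime : Prime (forcingPoly R n f' f₀')) :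
    (Ideal.span {forcingPoly R n f f₀}).minimalPrimes =
      insert (Ideal.span {forcingPoly R n f' f₀'})
        ((fun q : Ideal R => Ideal.map (C : R →+* MvPolynomial (Fin n) R) q) ''
          (Ideal.span {d}).minimalPrimes) ∧
    Ideal.span {forcingPoly R n f' f₀'} = horizontalPrime R n f f₀ := by
  classical
  set h := forcingPoly R n f f₀ with hh
  set h' := forcingPoly R n f' f₀' with hh'
  obtain ⟨i, hfi⟩ := hf
  -- coefficient relations
  have hrel : f i = d * f' i := by
    have := congrArg (coeff (Finsupp.single i 1)) hfact
    rwa [forcingPoly_coeff_single, coeff_C_mul, forcingPoly_coeff_single] at this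
  have hd : d ≠ 0 := fun h0 => hfi (by rw [hrel, h0, zero_mul])
  have hfi' : f' i ≠ 0 := fun h0 => hfi (by rw [hrel, h0, mul_zero])
  have hnc : ∀ r : R, h' ∣ C r → r = 0 := forcingPoly_dvd_C R n f' f₀' i hfi'
  have hndC : ∀ r : R, r ≠ 0 → ¬ h' ∣ C r := fun r hr hdvd => hr (hnc r hdvd)
  have hdvdh : h' ∣ h := ⟨C d, by rw [hfact]; ring⟩
  have hspanprime : (Ideal.span {h'}).IsPrime :=
    (Ideal.span_singleton_prime hprime.ne_zero).mpr hprime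
  constructor
  · -- the set of minimal primes
    ext P
    constructor
    · intro hP
      have hhP : h ∈ P := hP.1.2 (Ideal.subset_span rfl)
      have : C d * h' ∈ P := by rwa [← hfact]
      rcases hP.1.1.mem_or_mem this with hcd | hh'P
      · -- `C d ∈ P` : P is the extension of a minimal prime over `(d)`
        have hdmem : d ∈ Ideal.comap (C : R →+* MvPolynomial (Fin n) R) P := hcd
        have hspan_le : Ideal.span {d} ≤ Ideal.comap (C : R →+* MvPolynomial (Fin n) R) P := by
          rw [Ideal.span_le]; simpa using hdmem
        haveI : (Ideal.comap (C : R →+* MvPolynomial (Fin n) R) P).IsPrime := hP.1.1.comap C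
        obtain ⟨q, hq, hqle⟩ := Ideal.exists_minimalPrimes_le hspan_le
        have hqBP : Ideal.map (C : R →+* MvPolynomial (Fin n) R) q ≤ P :=
          le_trans (Ideal.map_mono hqle) Ideal.map_comap_le
        have hhqB : h ∈ Ideal.map (C : R →+* MvPolynomial (Fin n) R) q := by
          rw [hfact]
          exact Ideal.mul_mem_right _ _
            (Ideal.mem_map_of_mem _ (hq.1.2 (Ideal.subset_span rfl)))
        have hPle : P ≤ Ideal.map (C : R →+* MvPolynomial (Fin n) R) q :=
          hP.2 ⟨map_C_isPrime R n q hq.1.1, by rw [Ideal.span_le]; simpa using hhqB⟩ hqBP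
        exact Or.inr ⟨q, hq, (le_antisymm hqBP hPle)⟩
      · -- `h' ∈ P` : P is `(h')`
        left
        have hle : Ideal.span {h'} ≤ P := by rw [Ideal.span_le]; simpa using hh'P
        have hle2 : P ≤ Ideal.span {h'} :=
          hP.2 ⟨hspanprime,
            (by rw [Ideal.span_le]; simpa using Ideal.mem_span_singleton.mpr hdvdh :
              Ideal.span {h} ≤ Ideal.span {h'})⟩ hle
        exact le_antisymm hle2 hle
    · intro hP
      rcases hP with hP | ⟨q, hq, hPq⟩
      · -- `(h')` is a minimal prime over `(h)`
        subst hP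
        refine ⟨⟨hspanprime, ?_⟩, ?_⟩
        · rw [Ideal.span_le]; simpa using Ideal.mem_span_singleton.mpr hdvdh
        · rintro Q ⟨hQp, hQle⟩ hQP
          have hhQ : C d * h' ∈ Q := by rw [← hfact]; exact hQle (Ideal.subset_span rfl)
          rcases hQp.mem_or_mem hhQ with hcd | hh'Q
          · exact absurd (hnc d (Ideal.mem_span_singleton.mp (hQP hcd))) hd
          · rw [Ideal.span_le]; simpa using hh'Q
      · -- the extension of a minimal prime over `(d)` is a minimal prime over `(h)`
        subst hPq
        haveI hqP : q.IsPrime := hq.1.1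
        refine ⟨⟨map_C_isPrime R n q hqP, ?_⟩, ?_⟩
        · rw [Ideal.span_le]
          have : h ∈ Ideal.map (C : R →+* MvPolynomial (Fin n) R) q := by
            rw [hfact]
            exact Ideal.mul_mem_right _ _
              (Ideal.mem_map_of_mem _ (hq.1.2 (Ideal.subset_span rfl)))
          simpa using this
        · rintro Q ⟨hQp, hQle⟩ hQP
          have hhQ : C d * h' ∈ Q := by rw [← hfact]; exact hQle (Ideal.subset_span rfl)
          rcases hQp.mem_or_mem hhQ with hcd | hh'Q
          · have hdmem : d ∈ Ideal.comap (C : R →+* MvPolynomial (Fin n) R) Q := hcd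
            have hcomaple : Ideal.comap (C : R →+* MvPolynomial (Fin n) R) Q ≤ q := by
              calc Ideal.comap (C : R →+* MvPolynomial (Fin n) R) Q
                  ≤ Ideal.comap C (Ideal.map (C : R →+* MvPolynomial (Fin n) R) q) :=
                    Ideal.comap_mono hQP
                _ = q := comap_C_map_C R n q
            have hqle : q ≤ Ideal.comap (C : R →+* MvPolynomial (Fin n) R) Q :=
              hq.2 ⟨hQp.comap C, by rw [Ideal.span_le]; simpa using hdmem⟩ hcomaple
            calc Ideal.map (C : R →+* MvPolynomial (Fin n) R) q
                ≤ Ideal.map C (Ideal.comap (C : R →+* MvPolynomial (Fin n) R) Q) :=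
                  Ideal.map_mono hqle
              _ ≤ Q := Ideal.map_comap_le
          · exact absurd (hQP hh'Q) (prime_not_mem_map_C R n hd hq hprime hnc)
  · -- `(h')` is the horizontal prime
    set K := FractionRing R
    set φ := algebraMap R K with hφ
    have hφinj : Function.Injective φ := IsFractionRing.injective R K
    have hΦinj : Function.Injective (MvPolynomial.map φ : MvPolynomial (Fin n) R → _) :=
      MvPolynomial.map_injective φ hφinj
    have hmapfact : MvPolynomial.map φ h = C (φ d) * MvPolynomial.map φ h' := by
      rw [hfact, map_mul, map_C]
    have hunit : IsUnit (C (φ d) : MvPolynomial (Fin n) K) :=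
      (isUnit_iff_ne_zero.mpr (fun h0 => hd (hφinj (by simpa using h0)))).map
        (C : K →+* MvPolynomial (Fin n) K)
    have hspan2 : Ideal.span {MvPolynomial.map φ h} = Ideal.span {MvPolynomial.map φ h'} := by
      apply le_antisymm
      · rw [Ideal.span_le]
        simp only [Set.singleton_subset_iff, SetLike.mem_coe, Ideal.mem_span_singleton]
        exact ⟨C (φ d), by rw [hmapfact]; ring⟩
      · rw [Ideal.span_le]
        simp only [Set.singleton_subset_iff, SetLike.mem_coe, Ideal.mem_span_singleton]
        obtain ⟨w, hw⟩ := hunit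
        refine ⟨↑w⁻¹, ?_⟩
        rw [hmapfact, ← hw, mul_comm (↑w : MvPolynomial (Fin n) K), mul_assoc,
          Units.mul_inv, mul_one]
      -- span {Φ h} = span {Φ h'}
    show Ideal.span {h'} = Ideal.comap (MvPolynomial.map φ) (Ideal.span {MvPolynomial.map φ h})
    rw [hspan2]
    apply le_antisymm
    · intro g hg
      rw [Ideal.mem_span_singleton] at hg
      rw [Ideal.mem_comap, Ideal.mem_span_singleton]
      exact map_dvd (MvPolynomial.map φ) hg
    · intro g hg
      rw [Ideal.mem_comap, Ideal.mem_span_singleton] at hg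
      obtain ⟨u, hu⟩ := hg
      obtain ⟨s, u₀, hs, hu₀⟩ := clearDenoms R n u
      have heq : C s * g = h' * u₀ := by
        apply hΦinj
        rw [map_mul, map_mul, map_C, hu, hu₀]
        ring
      rw [Ideal.mem_span_singleton]
      exact (hprime.2.2 (C s) g ⟨u₀, heq⟩).resolve_left (hndC s hs)
end
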